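/- Let V be a finite-dimensional real inner product space and let p ≥ 3. Define E : V∖{0} → ℝ by E(x) = −(1/(p−2))·‖x‖^{2−p}. Then for every x ∈ V with x ≠ 0 and every orthonormal p-tuple (e₁,…,e_p) in V, Σ_{j=1}^p D²E(x)(e_j,e_j) ≥ 0, with equality if and only if x ∈ span{e₁,…,e_p}. In particular, E is φ-plurisubharmonic on V∖{0} for every alternating p-form φ of comass one on V. (Proposition 1.7) -/

import Mathlib

open scoped RealInnerProductSpace

noncomputable section

variable {V : Type*} [NormedAddCommGroup V] [InnerProductSpace ℝ V] [FiniteDimensional ℝ V]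

/-- The fundamental function `E(x) = −(1/(p−2))·‖x‖^{2−p}` (for `p ≥ 3`). -/
def fundE (p : ℕ) : V → ℝ := fun x => -(1 / ((p : ℝ) - 2)) * ‖x‖ ^ ((2 : ℝ) - (p : ℝ))

/-!
Writing `E = c · (‖x‖²)^s` with `s = (2 - p)/2`, the Hessian is
`D²E(x)(v, w) = ‖x‖^{-p} ⟪v, w⟫ - p ‖x‖^{-p-2} ⟪x, v⟫ ⟪x, w⟫`.
Its trace over an orthonormal `p`-tuple `e` is `p ‖x‖^{-p-2} (‖x‖² - ∑ ⟪e j, x⟫²)`, and by the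
Pythagorean identity the last factor is `‖x - Px‖²`, where `Px = ∑ ⟪e j, x⟫ e j` is the orthogonal
projection of `x` onto `span e`. Hence the trace is nonnegative and vanishes exactly when `x = Px`.
-/

section

variable {W ι : Type*} [NormedAddCommGroup W] [InnerProductSpace ℝ W] [Fintype ι] {e : ι → W}

theorem Orthonormal.norm_sub_sum_inner_smul_sq (he : Orthonormal ℝ e) (x : W) :
    ‖x - ∑ i, ⟪e i, x⟫ • e i‖ ^ 2 = ‖x‖ ^ 2 - ∑ i, ⟪e i, x⟫ ^ 2 := by
  have hcross : ⟪x, ∑ i, ⟪e i, x⟫ • e i⟫ = ∑ i, ⟪e i, x⟫ ^ 2 := by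
    simp only [inner_sum, real_inner_smul_right, real_inner_comm x, sq]
  have hproj : ‖∑ i, ⟪e i, x⟫ • e i‖ ^ 2 = ∑ i, ⟪e i, x⟫ ^ 2 := by
    rw [← real_inner_self_eq_norm_sq, he.inner_sum]
    simp only [conj_trivial, sq]
  rw [norm_sub_sq_real, hcross, hproj]
  ring

end

section

variable {𝕜 E ι : Type*} [RCLike 𝕜] [NormedAddCommGroup E] [InnerProductSpace 𝕜 E] [Fintype ι]
  {e : ι → E}

theorem Orthonormal.sum_inner_smul_eq_self_iff (he : Orthonormal 𝕜 e) {x : E} :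
    ∑ i, inner 𝕜 (e i) x • e i = x ↔ x ∈ Submodule.span 𝕜 (Set.range e) := by
  rw [Submodule.mem_span_range_iff_exists_fun]
  refine ⟨fun h => ⟨_, h⟩, ?_⟩
  rintro ⟨c, rfl⟩
  simp only [he.inner_right_fintype]

end

section

variable {E : Type*} [NormedAddCommGroup E]

theorem fundE_eq_smul_rpow_norm_sq (p : ℕ) :
    (fundE p : E → ℝ) = fun y => -(1 / ((p : ℝ) - 2)) • (‖y‖ ^ 2) ^ ((2 - (p : ℝ)) / 2) := by
  funext y
  rw [fundE, smul_eq_mul, ← Real.rpow_natCast, ← Real.rpow_mul (norm_nonneg y)]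
  ring_nf

variable [InnerProductSpace ℝ E]

theorem hasFDerivAt_rpow_norm_sq (s : ℝ) {x : E} (hx : x ≠ 0) :
    HasFDerivAt (fun y : E => (‖y‖ ^ 2) ^ s) ((2 * s * (‖x‖ ^ 2) ^ (s - 1)) • innerSL ℝ x) x := by
  convert (hasStrictFDerivAt_norm_sq x).hasFDerivAt.rpow_const (p := s) (Or.inl (by positivity))
    using 1
  rw [two_nsmul, ← two_smul ℝ, smul_smul]
  ring_nf

theorem iteratedFDeriv_two_rpow_norm_sq (s : ℝ) {x : E} (hx : x ≠ 0) (v w : E) :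
    iteratedFDeriv ℝ 2 (fun y : E => (‖y‖ ^ 2) ^ s) x ![v, w] =
      2 * s * (‖x‖ ^ 2) ^ (s - 1) * ⟪v, w⟫
        + 4 * s * (s - 1) * (‖x‖ ^ 2) ^ (s - 2) * (⟪x, v⟫ * ⟪x, w⟫) := by
  have hderiv : fderiv ℝ (fun y : E => (‖y‖ ^ 2) ^ s)
      =ᶠ[nhds x] fun y => (2 * s * (‖y‖ ^ 2) ^ (s - 1)) • innerSL ℝ y := by
    filter_upwards [isOpen_compl_singleton.mem_nhds hx] with y hy
    exact (hasFDerivAt_rpow_norm_sq s hy).fderiv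
  have hcoeff := (hasFDerivAt_rpow_norm_sq (s - 1) hx).const_mul (2 * s)
  have hsmul : HasFDerivAt (fun y => (2 * s * (‖y‖ ^ 2) ^ (s - 1)) • innerSL ℝ y) _ x :=
    hcoeff.smul (innerSL ℝ).hasFDerivAt
  have hinner : (innerSL ℝ : E →L[ℝ] E →L[ℝ] ℝ) v w = ⟪v, w⟫ := rfl
  rw [iteratedFDeriv_two_apply, hderiv.fderiv_eq, hsmul.fderiv]
  simp only [Matrix.cons_val_zero, Matrix.cons_val_one, Matrix.cons_val_fin_one, add_apply,
    smul_apply, ContinuousLinearMap.smulRight_apply, innerSL_apply_apply, smul_eq_mul, hinner]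
  ring_nf

theorem iteratedFDeriv_two_fundE {p : ℕ} (hp : p ≠ 2) {x : E} (hx : x ≠ 0) (v w : E) :
    iteratedFDeriv ℝ 2 (fundE p) x ![v, w] =
      (‖x‖ ^ 2) ^ (-(p : ℝ) / 2) * ⟪v, w⟫
        - p * (‖x‖ ^ 2) ^ (-(p : ℝ) / 2 - 1) * (⟪x, v⟫ * ⟪x, w⟫) := by
  have hp2 : (p : ℝ) - 2 ≠ 0 := sub_ne_zero.mpr (by exact_mod_cast hp)
  have hsmooth : ContDiffAt ℝ 2 (fun y : E => (‖y‖ ^ 2) ^ ((2 - (p : ℝ)) / 2)) x :=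
    (contDiffAt_id.norm_sq ℝ).rpow_const_of_ne (by simpa using hx)
  rw [fundE_eq_smul_rpow_norm_sq, iteratedFDeriv_const_smul_apply' hsmooth,
    smul_apply, iteratedFDeriv_two_rpow_norm_sq _ hx, smul_eq_mul]
  have hs1 : (2 - (p : ℝ)) / 2 - 1 = -(p : ℝ) / 2 := by ring
  have hs2 : (2 - (p : ℝ)) / 2 - 2 = -(p : ℝ) / 2 - 1 := by ring
  rw [hs1, hs2]
  field_simp
  ring

theorem sum_iteratedFDeriv_two_fundE {p : ℕ} (hp : p ≠ 2) {x : E} (hx : x ≠ 0) {e : Fin p → E}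
    (he : Orthonormal ℝ e) :
    ∑ j, iteratedFDeriv ℝ 2 (fundE p) x ![e j, e j] =
      p * (‖x‖ ^ 2) ^ (-(p : ℝ) / 2 - 1) * ‖x - ∑ j, ⟪e j, x⟫ • e j‖ ^ 2 := by
  have hunit : ∀ j, ⟪e j, e j⟫ = 1 := fun j => by
    rw [real_inner_self_eq_norm_sq, he.norm_eq_one j, one_pow]
  have hpow : (‖x‖ ^ 2) ^ (-(p : ℝ) / 2) = (‖x‖ ^ 2) ^ (-(p : ℝ) / 2 - 1) * ‖x‖ ^ 2 := by
    rw [← Real.rpow_add_one (by positivity), sub_add_cancel]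
  rw [he.norm_sub_sum_inner_smul_sq]
  simp only [iteratedFDeriv_two_fundE hp hx, hunit, real_inner_comm x, Finset.sum_sub_distrib,
    Finset.sum_const, Finset.card_univ, Fintype.card_fin, nsmul_eq_mul, ← Finset.mul_sum, hpow]
  ring_nf

theorem sum_iteratedFDeriv_two_fundE_nonneg {p : ℕ} (hp : p ≠ 2) {x : E} (hx : x ≠ 0)
    {e : Fin p → E} (he : Orthonormal ℝ e) :
    0 ≤ ∑ j, iteratedFDeriv ℝ 2 (fundE p) x ![e j, e j] := by
  rw [sum_iteratedFDeriv_two_fundE hp hx he]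
  positivity

theorem sum_iteratedFDeriv_two_fundE_eq_zero_iff {p : ℕ} (hp : p ≠ 2) (hp0 : p ≠ 0) {x : E}
    (hx : x ≠ 0) {e : Fin p → E} (he : Orthonormal ℝ e) :
    ∑ j, iteratedFDeriv ℝ 2 (fundE p) x ![e j, e j] = 0 ↔ x ∈ Submodule.span ℝ (Set.range e) := by
  have hcoeff : (p : ℝ) * (‖x‖ ^ 2) ^ (-(p : ℝ) / 2 - 1) ≠ 0 := by positivity
  rw [sum_iteratedFDeriv_two_fundE hp hx he, ← he.sum_inner_smul_eq_self_iff,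
    mul_eq_zero_iff_left hcoeff, sq_eq_zero_iff, norm_eq_zero, sub_eq_zero, eq_comm]

end

/-- Proposition 1.7: for `p ≥ 3` and `E(x) = −(1/(p−2))·‖x‖^{2−p}`, for every `x ≠ 0` and
every orthonormal `p`-tuple `(e₁,…,e_p)` one has `Σ_j D²E(x)(e_j,e_j) ≥ 0`, with equality
if and only if `x ∈ span{e₁,…,e_p}`.  In particular, `E` is `φ`-plurisubharmonic on
`V∖{0}` for every alternating `p`-form `φ` of comass one. -/
theorem fundE_psh {p : ℕ} (hp : 3 ≤ p) :
    (∀ x : V, x ≠ 0 → ∀ e : Fin p → V, Orthonormal ℝ e →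
      0 ≤ ∑ j, iteratedFDeriv ℝ 2 (fundE p) x ![e j, e j] ∧
        ((∑ j, iteratedFDeriv ℝ 2 (fundE p) x ![e j, e j]) = 0 ↔
          x ∈ Submodule.span ℝ (Set.range e))) ∧
    ∀ φ : V [⋀^Fin p]→ₗ[ℝ] ℝ, (∀ e : Fin p → V, Orthonormal ℝ e → φ e ≤ 1) →
      ∀ x : V, x ≠ 0 → ∀ e : Fin p → V, Orthonormal ℝ e → φ e = 1 →
        0 ≤ ∑ j, iteratedFDeriv ℝ 2 (fundE p) x ![e j, e j] := by
  have hp2 : p ≠ 2 := by omega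
  exact ⟨fun x hx e he => ⟨sum_iteratedFDeriv_two_fundE_nonneg hp2 hx he,
      sum_iteratedFDeriv_two_fundE_eq_zero_iff hp2 (by omega) hx he⟩,
    fun _ _ _ hx _ he _ => sum_iteratedFDeriv_two_fundE_nonneg hp2 hx he⟩
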